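/- Let G be a connected bipartite graph with n edges admitting a set-ordered graceful labeling, and let T be a connected graph with m edges admitting a graceful labeling, with G and T vertex-disjoint. Then there exist a vertex u of G and a vertex w of T such that the graph obtained by identifying u and w into a single vertex (a connected graph with m + n edges) admits a graceful labeling, i.e., an injective vertex labeling into {0, 1, ..., m+n} whose induced edge differences are exactly {1, 2, ..., m+n}. -/
import Mathlib


/-- `(X, Y)` is a bipartition of the graph `G`. -/
def IsBipartitionOf {V : Type*} (G : SimpleGraph V) (X Y : Set V) : Prop :=
  X ∪ Y = Set.univ ∧ Disjoint X Y ∧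
    ∀ u v, G.Adj u v → (u ∈ X ∧ v ∈ Y) ∨ (u ∈ Y ∧ v ∈ X)

/-- `f` is a graceful labeling of the graph `G` with `q` edges: `f` is injective into
`{0,…,q}` and the induced edge labels `|f u − f v|` are exactly `{1,…,q}`. -/
def IsGraceful {V : Type*} (G : SimpleGraph V) (q : ℕ) (f : V → ℕ) : Prop :=
  Function.Injective f ∧ (∀ v, f v ≤ q) ∧
    {n : ℕ | ∃ u v, G.Adj u v ∧ Nat.dist (f u) (f v) = n} = Set.Icc 1 q

/-- `f` is a set-ordered graceful labeling of `G` with `q` edges and bipartition `(X, Y)`. -/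
def IsSetOrderedGraceful {V : Type*} (G : SimpleGraph V) (q : ℕ) (X Y : Set V)
    (f : V → ℕ) : Prop :=
  IsGraceful G q f ∧ ∀ x ∈ X, ∀ y ∈ Y, f x < f y

/-- The relation describing the graph obtained from the disjoint union of `G` and `T` by
identifying the vertex `u` of `G` with the vertex `w` of `T` into a single vertex
(represented by `Sum.inl u`). -/
def mergeRel {V W : Type*} (G : SimpleGraph V) (T : SimpleGraph W) (u : V) (w : W) :
    (V ⊕ {x : W // x ≠ w}) → (V ⊕ {x : W // x ≠ w}) → Prop
  | Sum.inl a, Sum.inl b => G.Adj a b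
  | Sum.inl a, Sum.inr b => a = u ∧ T.Adj w b.1
  | Sum.inr _, Sum.inl _ => False
  | Sum.inr a, Sum.inr b => T.Adj a.1 b.1

lemma graceful_adj_mem {W : Type*} {T : SimpleGraph W} {m : ℕ} {g : W → ℕ}
    (hg : IsGraceful T m g) {a b : W} (h : T.Adj a b) :
    1 ≤ Nat.dist (g a) (g b) ∧ Nat.dist (g a) (g b) ≤ m := by
  have : Nat.dist (g a) (g b) ∈ Set.Icc 1 m := hg.2.2 ▸ ⟨a, b, h, rfl⟩
  exact ⟨this.1, this.2⟩

lemma graceful_exists_zero {W : Type*} {T : SimpleGraph W} {m : ℕ} {g : W → ℕ}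
    [Nonempty W] (hg : IsGraceful T m g) : ∃ w, g w = 0 := by
  rcases Nat.eq_zero_or_pos m with hm | hm
  · exact ⟨Classical.arbitrary W, Nat.le_zero.mp (hm ▸ hg.2.1 _)⟩
  · have : (m : ℕ) ∈ {n : ℕ | ∃ u v, T.Adj u v ∧ Nat.dist (g u) (g v) = n} := by
      rw [hg.2.2]; exact ⟨hm, le_refl m⟩
    obtain ⟨a, b, hab, hd⟩ := this
    have ha := hg.2.1 a
    have hb := hg.2.1 b
    simp only [Nat.dist] at hd
    rcases Nat.le_total (g a) (g b) with h | h
    · exact ⟨a, by omega⟩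
    · exact ⟨b, by omega⟩

/-- Covering the edge labels coming from `T` in the merged graph. -/
lemma cover_T {V W : Type*} (G : SimpleGraph V) (T : SimpleGraph W) {mT : ℕ} {g : W → ℕ}
    (hg : IsGraceful T mT g) (u : V) (w : W) (hw : g w = 0)
    (h : (V ⊕ {x : W // x ≠ w}) → ℕ) (s : ℕ)
    (hu : h (Sum.inl u) = s) (ht : ∀ t, h (Sum.inr t) = g t.1 + s) :
    ∀ d, 1 ≤ d → d ≤ mT → ∃ p q, (SimpleGraph.fromRel (mergeRel G T u w)).Adj p q ∧
      Nat.dist (h p) (h q) = d := by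
  intro d hd1 hd2
  have : d ∈ {n : ℕ | ∃ a b, T.Adj a b ∧ Nat.dist (g a) (g b) = n} := by
    rw [hg.2.2]; exact ⟨hd1, hd2⟩
  obtain ⟨a, b, hab, hd⟩ := this
  by_cases hbw : b = w
  · subst hbw
    have haw : a ≠ b := hab.ne
    refine ⟨Sum.inl u, Sum.inr ⟨a, haw⟩, ?_, ?_⟩
    · exact ⟨by simp, Or.inl ⟨rfl, hab.symm⟩⟩
    · rw [hu, ht]
      simp only [Nat.dist] at hd ⊢
      omega
  · by_cases haw : a = w
    · subst haw
      refine ⟨Sum.inl u, Sum.inr ⟨b, hbw⟩, ?_, ?_⟩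
      · exact ⟨by simp, Or.inl ⟨rfl, hab⟩⟩
      · rw [hu, ht]
        simp only [Nat.dist] at hd ⊢
        omega
    · refine ⟨Sum.inr ⟨a, haw⟩, Sum.inr ⟨b, hbw⟩, ?_, ?_⟩
      · refine ⟨?_, Or.inl hab⟩
        simp only [ne_eq, Sum.inr.injEq, Subtype.mk.injEq]
        exact hab.ne
      · rw [ht, ht]
        simp only [Nat.dist] at hd ⊢
        omega

/-- if a connected bipartite graph `G` with `n` edges admits a set-ordered
graceful labeling and a connected graph `T` with `m` edges admits a graceful labeling,
then there are vertices `u ∈ V(G)` and `w ∈ V(T)` such that the graph obtained by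
identifying `u` and `w` (having `m + n` edges) admits a graceful labeling. -/
theorem merged_graph_graceful {V W : Type*} [Fintype V] [Fintype W]
    (G : SimpleGraph V) (T : SimpleGraph W)
    (hGconn : G.Connected) (hTconn : T.Connected)
    (nG : ℕ) (hn : G.edgeSet.ncard = nG) (mT : ℕ) (hm : T.edgeSet.ncard = mT)
    (X Y : Set V) (hXY : IsBipartitionOf G X Y)
    (f : V → ℕ) (hf : IsSetOrderedGraceful G nG X Y f)
    (g : W → ℕ) (hg : IsGraceful T mT g) :
    ∃ (u : V) (w : W) (h : (V ⊕ {x : W // x ≠ w}) → ℕ),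
      IsGraceful (SimpleGraph.fromRel (mergeRel G T u w)) (mT + nG) h := by
  classical
  have hWne : Nonempty W := hTconn.nonempty
  have hVne : Nonempty V := hGconn.nonempty
  obtain ⟨hun, hdisj, hbip⟩ := hXY
  obtain ⟨hfg, hford⟩ := hf
  have hmemY : ∀ a, a ∉ X → a ∈ Y := by
    intro a ha
    have : a ∈ X ∪ Y := hun ▸ Set.mem_univ a
    rcases this with h | h
    · exact absurd h ha
    · exact h
  have hnotX : ∀ a, a ∈ Y → a ∉ X := fun a hY hX => hdisj.ne_of_mem hX hY rfl
  have hGd : ∀ a b, G.Adj a b → 1 ≤ Nat.dist (f a) (f b) ∧ Nat.dist (f a) (f b) ≤ nG :=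
    fun a b hab => graceful_adj_mem hfg hab
  have hTd : ∀ a b, T.Adj a b → 1 ≤ Nat.dist (g a) (g b) ∧ Nat.dist (g a) (g b) ≤ mT :=
    fun a b hab => graceful_adj_mem hg hab
  obtain ⟨w, hw⟩ := graceful_exists_zero hg
  by_cases hn0 : nG = 0
  · -- degenerate case : G is a single vertex, merged graph is essentially T
    subst hn0
    have hE : G.edgeSet = ∅ := (Set.ncard_eq_zero (Set.toFinite _)).mp hn
    have hNoAdj : ∀ a b : V, ¬ G.Adj a b := by
      intro a b hab
      have : s(a, b) ∈ G.edgeSet := hab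
      rw [hE] at this
      exact this
    have hsub : ∀ a b : V, a = b := by
      intro a b
      obtain ⟨p⟩ := hGconn a b
      cases p with
      | nil => rfl
      | cons h _ => exact absurd h (hNoAdj _ _)
    obtain ⟨u⟩ := hVne
    refine ⟨u, w, Sum.elim (fun _ => 0) (fun t => g t.1), ?_, ?_, ?_⟩
    · -- injective
      intro p q hpq
      match p, q with
      | Sum.inl a, Sum.inl b => exact congrArg Sum.inl (hsub a b)
      | Sum.inl a, Sum.inr t =>
        simp only [Sum.elim_inl, Sum.elim_inr] at hpq
        exact absurd (hg.1 (hw.trans hpq) : w = t.1) (Ne.symm t.2)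
      | Sum.inr t, Sum.inl a =>
        simp only [Sum.elim_inl, Sum.elim_inr] at hpq
        exact absurd (hg.1 (hpq.trans hw.symm) : t.1 = w) t.2
      | Sum.inr t, Sum.inr t' =>
        simp only [Sum.elim_inr] at hpq
        exact congrArg Sum.inr (Subtype.ext (hg.1 hpq))
    · -- bounds
      intro v
      rcases v with a | t <;> simp only [Sum.elim_inl, Sum.elim_inr]
      · omega
      · have := hg.2.1 t.1; omega
    · -- edge labels
      ext d
      simp only [Set.mem_setOf_eq, Set.mem_Icc]
      constructor
      · rintro ⟨p, q, hadj, hd⟩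
        obtain ⟨hne, hR⟩ := hadj
        match p, q with
        | Sum.inl a, Sum.inl b =>
          exfalso
          rcases hR with h | h
          · exact hNoAdj a b h
          · exact hNoAdj b a h
        | Sum.inl a, Sum.inr t =>
          have hT : T.Adj w t.1 := by
            rcases hR with ⟨_, h⟩ | h
            · exact h
            · exact absurd h not_false
          have h2 := hTd w t.1 hT
          simp only [Sum.elim_inl, Sum.elim_inr] at hd
          simp only [Nat.dist, hw] at h2 hd
          omega
        | Sum.inr t, Sum.inl a =>
          have hT : T.Adj w t.1 := by
            rcases hR with h | ⟨_, h⟩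
            · exact absurd h not_false
            · exact h
          have h2 := hTd w t.1 hT
          simp only [Sum.elim_inl, Sum.elim_inr] at hd
          simp only [Nat.dist, hw] at h2 hd
          omega
        | Sum.inr t, Sum.inr t' =>
          have hT : T.Adj t.1 t'.1 := by
            rcases hR with h | h
            · exact h
            · exact h.symm
          have h2 := hTd t.1 t'.1 hT
          simp only [Sum.elim_inr] at hd
          simp only [Nat.dist] at h2 hd
          omega
      · rintro ⟨hd1, hd2⟩
        exact cover_T G T hg u w hw _ 0 rfl (fun t => by simp) d hd1 (by omega)
  · -- main case : nG ≥ 1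
    have hXne : X.Nonempty := by
      have : (nG : ℕ) ∈ {n : ℕ | ∃ a b, G.Adj a b ∧ Nat.dist (f a) (f b) = n} := by
        rw [hfg.2.2]; exact ⟨by omega, le_refl nG⟩
      obtain ⟨a, b, hab, _⟩ := this
      rcases hbip a b hab with ⟨h, _⟩ | ⟨_, h⟩
      · exact ⟨a, h⟩
      · exact ⟨b, h⟩
    obtain ⟨u, huX, humax⟩ := Set.exists_max_image X f (Set.toFinite X) hXne
    have hsle : f u ≤ nG := hfg.2.1 u
    have hYgt : ∀ a ∈ Y, f u < f a := fun a ha => hford u huX a ha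
    have gpos : ∀ t : {x : W // x ≠ w}, 1 ≤ g t.1 := by
      intro t
      have : g t.1 ≠ 0 := fun h0 => t.2 (hg.1 (h0.trans hw.symm))
      omega
    refine ⟨u, w, Sum.elim (fun a => if a ∈ X then f a else f a + mT)
      (fun t => g t.1 + f u), ?_, ?_, ?_⟩
    · -- injective
      intro p q hpq
      match p, q with
      | Sum.inl a, Sum.inl b =>
        simp only [Sum.elim_inl] at hpq
        refine congrArg Sum.inl (hfg.1 ?_)
        by_cases ha : a ∈ X
        · by_cases hb : b ∈ X
          · rwa [if_pos ha, if_pos hb] at hpq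
          · rw [if_pos ha, if_neg hb] at hpq
            have h1 := hYgt b (hmemY b hb)
            have h2 := humax a ha
            omega
        · by_cases hb : b ∈ X
          · rw [if_neg ha, if_pos hb] at hpq
            have h1 := hYgt a (hmemY a ha)
            have h2 := humax b hb
            omega
          · rw [if_neg ha, if_neg hb] at hpq
            omega
      | Sum.inl a, Sum.inr t =>
        exfalso
        simp only [Sum.elim_inl, Sum.elim_inr] at hpq
        have h1 := gpos t
        have h2 := hg.2.1 t.1
        by_cases ha : a ∈ X
        · rw [if_pos ha] at hpq
          have := humax a ha
          omega
        · rw [if_neg ha] at hpq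
          have := hYgt a (hmemY a ha)
          omega
      | Sum.inr t, Sum.inl a =>
        exfalso
        simp only [Sum.elim_inl, Sum.elim_inr] at hpq
        have h1 := gpos t
        have h2 := hg.2.1 t.1
        by_cases ha : a ∈ X
        · rw [if_pos ha] at hpq
          have := humax a ha
          omega
        · rw [if_neg ha] at hpq
          have := hYgt a (hmemY a ha)
          omega
      | Sum.inr t, Sum.inr t' =>
        simp only [Sum.elim_inr] at hpq
        exact congrArg Sum.inr (Subtype.ext (hg.1 (by omega)))
    · -- bounds
      intro v
      rcases v with a | t
      · simp only [Sum.elim_inl]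
        have := hfg.2.1 a
        by_cases ha : a ∈ X
        · rw [if_pos ha]; omega
        · rw [if_neg ha]; omega
      · simp only [Sum.elim_inr]
        have := hg.2.1 t.1
        omega
    · -- edge labels
      ext d
      simp only [Set.mem_setOf_eq, Set.mem_Icc]
      constructor
      · rintro ⟨p, q, hadj, hd⟩
        obtain ⟨hne, hR⟩ := hadj
        match p, q with
        | Sum.inl a, Sum.inl b =>
          have hab : G.Adj a b := by
            rcases hR with h | h
            · exact h
            · exact h.symm
          have hGab := hGd a b hab
          simp only [Sum.elim_inl] at hd
          rcases hbip a b hab with ⟨haX, hbY⟩ | ⟨haY, hbX⟩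
          · have hlt : f a < f b := hford a haX b hbY
            rw [if_pos haX, if_neg (hnotX b hbY)] at hd
            simp only [Nat.dist] at hd hGab
            omega
          · have hlt : f b < f a := hford b hbX a haY
            rw [if_neg (hnotX a haY), if_pos hbX] at hd
            simp only [Nat.dist] at hd hGab
            omega
        | Sum.inl a, Sum.inr t =>
          have hT : a = u ∧ T.Adj w t.1 := by
            rcases hR with h | h
            · exact h
            · exact absurd h not_false
          obtain ⟨rfl, hT⟩ := hT
          have h2 := hTd w t.1 hT
          simp only [Sum.elim_inl, Sum.elim_inr] at hd
          rw [if_pos huX] at hd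
          simp only [Nat.dist, hw] at h2 hd
          omega
        | Sum.inr t, Sum.inl a =>
          have hT : a = u ∧ T.Adj w t.1 := by
            rcases hR with h | h
            · exact absurd h not_false
            · exact h
          obtain ⟨rfl, hT⟩ := hT
          have h2 := hTd w t.1 hT
          simp only [Sum.elim_inl, Sum.elim_inr] at hd
          rw [if_pos huX] at hd
          simp only [Nat.dist, hw] at h2 hd
          omega
        | Sum.inr t, Sum.inr t' =>
          have hT : T.Adj t.1 t'.1 := by
            rcases hR with h | h
            · exact h
            · exact h.symm
          have h2 := hTd t.1 t'.1 hT
          simp only [Sum.elim_inr] at hd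
          simp only [Nat.dist] at h2 hd
          omega
      · rintro ⟨hd1, hd2⟩
        by_cases hdm : d ≤ mT
        · exact cover_T G T hg u w hw _ (f u)
            (by simp only [Sum.elim_inl]; rw [if_pos huX]) (fun t => rfl) d hd1 hdm
        · have : (d - mT : ℕ) ∈ {n : ℕ | ∃ a b, G.Adj a b ∧ Nat.dist (f a) (f b) = n} := by
            rw [hfg.2.2]; exact ⟨by omega, by omega⟩
          obtain ⟨a, b, hab, hd'⟩ := this
          rcases hbip a b hab with ⟨haX, hbY⟩ | ⟨haY, hbX⟩
          · refine ⟨Sum.inl a, Sum.inl b, ⟨by simpa using hab.ne, Or.inl hab⟩, ?_⟩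
            have hlt : f a < f b := hford a haX b hbY
            simp only [Sum.elim_inl]
            rw [if_pos haX, if_neg (hnotX b hbY)]
            simp only [Nat.dist] at hd' ⊢
            omega
          · refine ⟨Sum.inl a, Sum.inl b, ⟨by simpa using hab.ne, Or.inl hab⟩, ?_⟩
            have hlt : f b < f a := hford b hbX a haY
            simp only [Sum.elim_inl]
            rw [if_neg (hnotX a haY), if_pos hbX]
            simp only [Nat.dist] at hd' ⊢
            omega
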